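/- arXiv:1707.05867 — 3 statements merged into one kernel-verified Lean document; each statement's English description precedes it below -/
import Mathlib

section
/- Let X and Y be i.i.d. random variables distributed as Binomial(n, p) with 1/n ≤ p ≤ 1/2 (or with the asymptotic condition p = ω(1/n)). Then E[min{|X−Y|, √(np)}] = Ω(√(np)), i.e., there is a universal constant c > 0 such that for all sufficiently large np, E[min{|X−Y|, √(np)}] ≥ c·√(np). -/
open Finset

noncomputable def bpmf (n : ℕ) (p : ℝ) (k : ℕ) : ℝ :=
  (n.choose k : ℝ) * p ^ k * (1 - p) ^ (n - k)

lemma bpmf_sum (n : ℕ) (p : ℝ) : ∑ k ∈ range (n + 1), bpmf n p k = 1 := by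
  have h := add_pow p (1 - p) n
  simp only [add_sub_cancel, one_pow] at h
  rw [h]
  exact sum_congr rfl fun k _ => by unfold bpmf; ring

lemma bpmf_transfer (n : ℕ) (p : ℝ) (f : ℕ → ℝ) :
    ∑ k ∈ range (n + 2), (k : ℝ) * f k * bpmf (n + 1) p k
      = ((n : ℝ) + 1) * p * ∑ k ∈ range (n + 1), f (k + 1) * bpmf n p k := by
  rw [Finset.sum_range_succ', Finset.mul_sum]
  simp only [Nat.cast_zero, zero_mul]
  rw [add_zero]
  apply sum_congr rfl
  intro k hk
  unfold bpmf
  have hc : ((n + 1).choose (k + 1) : ℝ) * ((k : ℝ) + 1) = ((n : ℝ) + 1) * (n.choose k : ℝ) := by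
    have h2 : (((n + 1).choose (k + 1) * (k + 1) : ℕ) : ℝ) = (((n + 1) * n.choose k : ℕ) : ℝ) := by
      exact_mod_cast congrArg (Nat.cast : ℕ → ℝ) (Nat.add_one_mul_choose_eq n k).symm
    push_cast at h2; linarith
  have hsub : (n + 1) - (k + 1) = n - k := by omega
  rw [hsub]
  push_cast
  linear_combination f (k + 1) * p ^ (k + 1) * (1 - p) ^ (n - k) * hc

lemma bpmf_m1 (n : ℕ) (p : ℝ) :
    ∑ k ∈ range (n + 1), (k : ℝ) * bpmf n p k = n * p := by
  cases n with
  | zero => simp [bpmf]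
  | succ m =>
    have h := bpmf_transfer m p (fun _ => 1)
    simp only [mul_one, one_mul] at h
    rw [show m.succ + 1 = m + 2 from rfl] at *
    calc ∑ k ∈ range (m + 2), (k : ℝ) * bpmf (m + 1) p k
        = ((m : ℝ) + 1) * p * ∑ k ∈ range (m + 1), bpmf m p k := h
      _ = (m.succ : ℝ) * p := by rw [bpmf_sum]; push_cast; ring

lemma bpmf_m2 (n : ℕ) (p : ℝ) :
    ∑ k ∈ range (n + 1), (k : ℝ) ^ 2 * bpmf n p k
      = n * p + n * ((n : ℝ) - 1) * p ^ 2 := by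
  cases n with
  | zero => simp [bpmf]
  | succ m =>
    have h := bpmf_transfer m p (fun k => (k : ℝ))
    have e1 : ∑ k ∈ range (m + 2), (k : ℝ) ^ 2 * bpmf (m + 1) p k
        = ∑ k ∈ range (m + 2), (k : ℝ) * (k : ℝ) * bpmf (m + 1) p k :=
      sum_congr rfl fun k _ => by ring
    have e2 : ∑ k ∈ range (m + 1), ((k + 1 : ℕ) : ℝ) * bpmf m p k
        = (∑ k ∈ range (m + 1), (k : ℝ) * bpmf m p k)
          + ∑ k ∈ range (m + 1), bpmf m p k := by
      rw [← Finset.sum_add_distrib]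
      exact sum_congr rfl fun k _ => by push_cast; ring
    rw [show m.succ + 1 = m + 2 from rfl] at *
    rw [e1, h, e2, bpmf_m1, bpmf_sum]
    push_cast; ring

lemma bpmf_m3 (n : ℕ) (p : ℝ) :
    ∑ k ∈ range (n + 1), (k : ℝ) ^ 3 * bpmf n p k
      = n * p + 3 * n * ((n : ℝ) - 1) * p ^ 2
        + n * ((n : ℝ) - 1) * ((n : ℝ) - 2) * p ^ 3 := by
  cases n with
  | zero => simp [bpmf]
  | succ m =>
    have h := bpmf_transfer m p (fun k => (k : ℝ) ^ 2)
    have e1 : ∑ k ∈ range (m + 2), (k : ℝ) ^ 3 * bpmf (m + 1) p k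
        = ∑ k ∈ range (m + 2), (k : ℝ) * (k : ℝ) ^ 2 * bpmf (m + 1) p k :=
      sum_congr rfl fun k _ => by ring
    have e2 : ∑ k ∈ range (m + 1), ((k + 1 : ℕ) : ℝ) ^ 2 * bpmf m p k
        = (∑ k ∈ range (m + 1), (k : ℝ) ^ 2 * bpmf m p k)
          + 2 * ∑ k ∈ range (m + 1), (k : ℝ) * bpmf m p k
          + ∑ k ∈ range (m + 1), bpmf m p k := by
      rw [Finset.mul_sum, ← Finset.sum_add_distrib, ← Finset.sum_add_distrib]
      exact sum_congr rfl fun k _ => by push_cast; ring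
    rw [show m.succ + 1 = m + 2 from rfl] at *
    rw [e1, h, e2, bpmf_m2, bpmf_m1, bpmf_sum]
    push_cast; ring

lemma bpmf_m4 (n : ℕ) (p : ℝ) :
    ∑ k ∈ range (n + 1), (k : ℝ) ^ 4 * bpmf n p k
      = n * p + 7 * n * ((n : ℝ) - 1) * p ^ 2
        + 6 * n * ((n : ℝ) - 1) * ((n : ℝ) - 2) * p ^ 3
        + n * ((n : ℝ) - 1) * ((n : ℝ) - 2) * ((n : ℝ) - 3) * p ^ 4 := by
  cases n with
  | zero => simp [bpmf]
  | succ m =>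
    have h := bpmf_transfer m p (fun k => (k : ℝ) ^ 3)
    have e1 : ∑ k ∈ range (m + 2), (k : ℝ) ^ 4 * bpmf (m + 1) p k
        = ∑ k ∈ range (m + 2), (k : ℝ) * (k : ℝ) ^ 3 * bpmf (m + 1) p k :=
      sum_congr rfl fun k _ => by ring
    have e2 : ∑ k ∈ range (m + 1), ((k + 1 : ℕ) : ℝ) ^ 3 * bpmf m p k
        = (∑ k ∈ range (m + 1), (k : ℝ) ^ 3 * bpmf m p k)
          + 3 * ∑ k ∈ range (m + 1), (k : ℝ) ^ 2 * bpmf m p k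
          + 3 * ∑ k ∈ range (m + 1), (k : ℝ) * bpmf m p k
          + ∑ k ∈ range (m + 1), bpmf m p k := by
      rw [Finset.mul_sum, Finset.mul_sum, ← Finset.sum_add_distrib,
        ← Finset.sum_add_distrib, ← Finset.sum_add_distrib]
      exact sum_congr rfl fun k _ => by push_cast; ring
    rw [show m.succ + 1 = m + 2 from rfl] at *
    rw [e1, h, e2, bpmf_m3, bpmf_m2, bpmf_m1, bpmf_sum]
    push_cast; ring

lemma pair_sum (n : ℕ) (p : ℝ) (f g : ℕ → ℝ) :
    ∑ x ∈ (range (n + 1)) ×ˢ (range (n + 1)),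
        bpmf n p x.1 * bpmf n p x.2 * (f x.1 * g x.2)
      = (∑ k ∈ range (n + 1), f k * bpmf n p k)
        * (∑ k ∈ range (n + 1), g k * bpmf n p k) := by
  rw [Finset.sum_product, Finset.sum_mul_sum]
  exact sum_congr rfl fun k _ => sum_congr rfl fun l _ => by ring

lemma w_sum (n : ℕ) (p : ℝ) :
    ∑ x ∈ (range (n + 1)) ×ˢ (range (n + 1)), bpmf n p x.1 * bpmf n p x.2 = 1 := by
  have := pair_sum n p (fun _ => 1) (fun _ => 1)
  simp only [one_mul, mul_one] at this
  rw [this, bpmf_sum]; ring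

lemma A_eq (n : ℕ) (p : ℝ) :
    ∑ x ∈ (range (n + 1)) ×ˢ (range (n + 1)),
        bpmf n p x.1 * bpmf n p x.2 * ((x.1 : ℝ) - (x.2 : ℝ)) ^ 2
      = 2 * (n * p * (1 - p)) := by
  have e : ∀ x ∈ (range (n + 1)) ×ˢ (range (n + 1)),
      bpmf n p x.1 * bpmf n p x.2 * ((x.1 : ℝ) - (x.2 : ℝ)) ^ 2
        = bpmf n p x.1 * bpmf n p x.2 * ((x.1 : ℝ) ^ 2 * 1)
          - 2 * (bpmf n p x.1 * bpmf n p x.2 * ((x.1 : ℝ) * (x.2 : ℝ)))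
          + bpmf n p x.1 * bpmf n p x.2 * (1 * (x.2 : ℝ) ^ 2) :=
    fun x _ => by ring
  rw [sum_congr rfl e, Finset.sum_add_distrib, Finset.sum_sub_distrib, ← Finset.mul_sum,
    pair_sum n p (fun k => (k : ℝ) ^ 2) (fun _ => 1),
    pair_sum n p (fun k => (k : ℝ)) (fun k => (k : ℝ)),
    pair_sum n p (fun _ => 1) (fun k => (k : ℝ) ^ 2)]
  simp only [one_mul]
  rw [bpmf_sum, bpmf_m1, bpmf_m2]
  ring

lemma B_eq (n : ℕ) (p : ℝ) :
    ∑ x ∈ (range (n + 1)) ×ˢ (range (n + 1)),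
        bpmf n p x.1 * bpmf n p x.2 * (((x.1 : ℝ) - (x.2 : ℝ)) ^ 2) ^ 2
      = 12 * (n * p * (1 - p)) ^ 2
        + 2 * (n * p * (1 - p)) * (1 - 6 * (p * (1 - p))) := by
  have e : ∀ x ∈ (range (n + 1)) ×ˢ (range (n + 1)),
      bpmf n p x.1 * bpmf n p x.2 * (((x.1 : ℝ) - (x.2 : ℝ)) ^ 2) ^ 2
        = bpmf n p x.1 * bpmf n p x.2 * ((x.1 : ℝ) ^ 4 * 1)
          - 4 * (bpmf n p x.1 * bpmf n p x.2 * ((x.1 : ℝ) ^ 3 * (x.2 : ℝ)))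
          + 6 * (bpmf n p x.1 * bpmf n p x.2 * ((x.1 : ℝ) ^ 2 * (x.2 : ℝ) ^ 2))
          - 4 * (bpmf n p x.1 * bpmf n p x.2 * ((x.1 : ℝ) * (x.2 : ℝ) ^ 3))
          + bpmf n p x.1 * bpmf n p x.2 * (1 * (x.2 : ℝ) ^ 4) :=
    fun x _ => by ring
  rw [sum_congr rfl e, Finset.sum_add_distrib, Finset.sum_sub_distrib,
    Finset.sum_add_distrib, Finset.sum_sub_distrib, ← Finset.mul_sum, ← Finset.mul_sum,
    ← Finset.mul_sum,
    pair_sum n p (fun k => (k : ℝ) ^ 4) (fun _ => 1),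
    pair_sum n p (fun k => (k : ℝ) ^ 3) (fun k => (k : ℝ)),
    pair_sum n p (fun k => (k : ℝ) ^ 2) (fun k => (k : ℝ) ^ 2),
    pair_sum n p (fun k => (k : ℝ)) (fun k => (k : ℝ) ^ 3),
    pair_sum n p (fun _ => 1) (fun k => (k : ℝ) ^ 4)]
  simp only [one_mul]
  rw [bpmf_sum, bpmf_m1, bpmf_m2, bpmf_m3, bpmf_m4]
  ring

/-- For i.i.d. X, Y ~ Binomial(n,p) with 1/n ≤ p ≤ 1/2,
`E[min{|X−Y|, √(np)}] = Ω(√(np))`: there is a universal constant `c > 0` such that for all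
sufficiently large `np`, the expectation (written out as a double sum over the binomial pmf)
is at least `c·√(np)`. -/
theorem stmt_0 :
    ∃ c : ℝ, 0 < c ∧ ∃ M : ℝ, ∀ (n : ℕ) (p : ℝ),
      1 / (n : ℝ) ≤ p → p ≤ 1 / 2 → M ≤ (n : ℝ) * p →
      c * Real.sqrt ((n : ℝ) * p) ≤
        ∑ k ∈ range (n + 1), ∑ l ∈ range (n + 1),
          ((n.choose k : ℝ) * p ^ k * (1 - p) ^ (n - k)) *
          ((n.choose l : ℝ) * p ^ l * (1 - p) ^ (n - l)) *
          min |(k : ℝ) - (l : ℝ)| (Real.sqrt ((n : ℝ) * p)) := by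
  refine ⟨9 / 112, by norm_num, 2, fun n p h1 h2 hM => ?_⟩
  have hconv : (∑ k ∈ range (n + 1), ∑ l ∈ range (n + 1),
        ((n.choose k : ℝ) * p ^ k * (1 - p) ^ (n - k)) *
        ((n.choose l : ℝ) * p ^ l * (1 - p) ^ (n - l)) *
        min |(k : ℝ) - (l : ℝ)| (Real.sqrt ((n : ℝ) * p)))
      = ∑ x ∈ (range (n + 1)) ×ˢ (range (n + 1)),
          bpmf n p x.1 * bpmf n p x.2 *
          min |(x.1 : ℝ) - (x.2 : ℝ)| (Real.sqrt ((n : ℝ) * p)) := by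
    rw [Finset.sum_product]
    exact sum_congr rfl fun k _ => sum_congr rfl fun l _ => by simp [bpmf]
  rw [hconv]
  -- basic facts
  have hnp : (2 : ℝ) ≤ (n : ℝ) * p := hM
  have hn0 : n ≠ 0 := by
    rintro rfl; simp at hnp; linarith
  have hn1 : (1 : ℝ) ≤ (n : ℝ) := by
    exact_mod_cast Nat.one_le_iff_ne_zero.mpr hn0
  have hp : 0 < p := lt_of_lt_of_le (by positivity) h1
  have hq : (1 : ℝ) / 2 ≤ 1 - p := by linarith
  have hq1 : 1 - p ≤ 1 := by linarith
  set σ2 : ℝ := (n : ℝ) * p * (1 - p) with hσ2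
  have hσ1 : 1 ≤ σ2 := by nlinarith
  have hnp0 : 0 ≤ (n : ℝ) * p := by linarith
  set s := (range (n + 1)) ×ˢ (range (n + 1)) with hs
  set w : ℕ × ℕ → ℝ := fun x => bpmf n p x.1 * bpmf n p x.2 with hw
  have hw0 : ∀ x, 0 ≤ w x := by
    intro x
    have h01 : 0 ≤ 1 - p := by linarith
    unfold w
    unfold bpmf
    positivity
  set Z : ℕ × ℕ → ℝ := fun x => ((x.1 : ℝ) - (x.2 : ℝ)) ^ 2 with hZ
  have hZ0 : ∀ x, 0 ≤ Z x := fun x => sq_nonneg _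
  set T := s.filter (fun x => σ2 / 2 ≤ Z x) with hT
  have hTs : T ⊆ s := filter_subset _ _
  -- total mass
  have hwsum : ∑ x ∈ s, w x = 1 := w_sum n p
  have hA : ∑ x ∈ s, w x * Z x = 2 * σ2 := A_eq n p
  have hB : ∑ x ∈ s, w x * Z x ^ 2 ≤ 14 * σ2 ^ 2 := by
    have := B_eq n p
    have hpq : 0 ≤ p * (1 - p) := by nlinarith
    calc ∑ x ∈ s, w x * Z x ^ 2
        = 12 * σ2 ^ 2 + 2 * σ2 * (1 - 6 * (p * (1 - p))) := this
      _ ≤ 14 * σ2 ^ 2 := by nlinarith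
  -- mass of T
  have hmass : ∑ x ∈ T, w x ≤ 1 := by
    rw [← hwsum]
    exact Finset.sum_le_sum_of_subset_of_nonneg hTs fun x _ _ => hw0 x
  have hmass0 : 0 ≤ ∑ x ∈ T, w x := Finset.sum_nonneg fun x _ => hw0 x
  -- sum over complement is small
  have hcomp : ∑ x ∈ s \ T, w x * Z x ≤ σ2 / 2 := by
    have step : ∑ x ∈ s \ T, w x * Z x ≤ ∑ x ∈ s \ T, w x * (σ2 / 2) := by
      apply Finset.sum_le_sum
      intro x hx
      rw [Finset.mem_sdiff, hT, Finset.mem_filter] at hx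
      have : ¬ σ2 / 2 ≤ Z x := fun h => hx.2 ⟨hx.1, h⟩
      exact mul_le_mul_of_nonneg_left (le_of_not_ge this) (hw0 x)
    have step2 : ∑ x ∈ s \ T, w x * (σ2 / 2) ≤ σ2 / 2 := by
      rw [← Finset.sum_mul]
      have : ∑ x ∈ s \ T, w x ≤ 1 := by
        rw [← hwsum]
        exact Finset.sum_le_sum_of_subset_of_nonneg (sdiff_subset) fun x _ _ => hw0 x
      nlinarith [Finset.sum_nonneg (fun x (_ : x ∈ s \ T) => hw0 x)]
    linarith
  -- sum over T is large
  have hTbig : 3 * σ2 / 2 ≤ ∑ x ∈ T, w x * Z x := by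
    have := Finset.sum_sdiff hTs (f := fun x => w x * Z x)
    -- this : ∑ x ∈ s \ T, w x * Z x + ∑ x ∈ T, w x * Z x = ∑ x ∈ s, w x * Z x
    rw [hA] at this
    linarith
  -- Cauchy-Schwarz
  have hcs := Finset.sum_mul_sq_le_sq_mul_sq T
      (fun x => Real.sqrt (w x)) (fun x => Real.sqrt (w x) * Z x)
  have e1 : ∑ x ∈ T, Real.sqrt (w x) * (Real.sqrt (w x) * Z x) = ∑ x ∈ T, w x * Z x :=
    sum_congr rfl fun x _ => by rw [← mul_assoc, Real.mul_self_sqrt (hw0 x)]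
  have e2 : ∑ x ∈ T, (Real.sqrt (w x)) ^ 2 = ∑ x ∈ T, w x :=
    sum_congr rfl fun x _ => Real.sq_sqrt (hw0 x)
  have e3 : ∑ x ∈ T, (Real.sqrt (w x) * Z x) ^ 2 = ∑ x ∈ T, w x * Z x ^ 2 :=
    sum_congr rfl fun x _ => by rw [mul_pow, Real.sq_sqrt (hw0 x)]
  rw [e1, e2, e3] at hcs
  have hBT : ∑ x ∈ T, w x * Z x ^ 2 ≤ 14 * σ2 ^ 2 := by
    refine le_trans ?_ hB
    exact Finset.sum_le_sum_of_subset_of_nonneg hTs fun x _ _ =>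
      mul_nonneg (hw0 x) (sq_nonneg _)
  -- P(T) ≥ 9/56
  have hPT : 9 / 56 ≤ ∑ x ∈ T, w x := by
    have h1' : (3 * σ2 / 2) ^ 2 ≤ (∑ x ∈ T, w x) * (14 * σ2 ^ 2) := by
      calc (3 * σ2 / 2) ^ 2 ≤ (∑ x ∈ T, w x * Z x) ^ 2 := by
            apply pow_le_pow_left₀ (by positivity) hTbig
        _ ≤ (∑ x ∈ T, w x) * ∑ x ∈ T, w x * Z x ^ 2 := hcs
        _ ≤ (∑ x ∈ T, w x) * (14 * σ2 ^ 2) := by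
            exact mul_le_mul_of_nonneg_left hBT hmass0
    by_contra hlt
    push_neg at hlt
    have hσpos : (0 : ℝ) < σ2 := lt_of_lt_of_le one_pos hσ1
    have hmul := mul_lt_mul_of_pos_right hlt (show (0:ℝ) < 14 * σ2 ^ 2 by positivity)
    have heq : (3 * σ2 / 2) ^ 2 = 9 / 56 * (14 * σ2 ^ 2) := by ring
    linarith
  -- on T, min is at least √(np)/2
  have hmin : ∀ x ∈ T, Real.sqrt ((n : ℝ) * p) / 2
      ≤ min |(x.1 : ℝ) - (x.2 : ℝ)| (Real.sqrt ((n : ℝ) * p)) := by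
    intro x hx
    rw [hT, Finset.mem_filter] at hx
    have hZx : (n : ℝ) * p / 4 ≤ Z x := by
      have : σ2 / 2 ≤ Z x := hx.2
      have : (n : ℝ) * p / 4 ≤ σ2 / 2 := by nlinarith
      linarith [hx.2]
    have habs : Real.sqrt ((n : ℝ) * p) / 2 ≤ |(x.1 : ℝ) - (x.2 : ℝ)| := by
      have h4 : (Real.sqrt ((n : ℝ) * p) / 2) ^ 2 ≤ Z x := by
        rw [div_pow, Real.sq_sqrt hnp0]
        norm_num
        linarith
      have := Real.sqrt_le_sqrt h4
      rwa [Real.sqrt_sq (by positivity), hZ, Real.sqrt_sq_eq_abs] at this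
    have hsq : Real.sqrt ((n : ℝ) * p) / 2 ≤ Real.sqrt ((n : ℝ) * p) := by
      have := Real.sqrt_nonneg ((n : ℝ) * p); linarith
    exact le_min habs hsq
  -- assemble
  have key : ∑ x ∈ s, w x * min |(x.1 : ℝ) - (x.2 : ℝ)| (Real.sqrt ((n : ℝ) * p))
      ≥ 9 / 112 * Real.sqrt ((n : ℝ) * p) := by
    have step1 : ∑ x ∈ T, w x * (Real.sqrt ((n : ℝ) * p) / 2)
        ≤ ∑ x ∈ T, w x * min |(x.1 : ℝ) - (x.2 : ℝ)| (Real.sqrt ((n : ℝ) * p)) :=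
      Finset.sum_le_sum fun x hx => mul_le_mul_of_nonneg_left (hmin x hx) (hw0 x)
    have step2 : ∑ x ∈ T, w x * min |(x.1 : ℝ) - (x.2 : ℝ)| (Real.sqrt ((n : ℝ) * p))
        ≤ ∑ x ∈ s, w x * min |(x.1 : ℝ) - (x.2 : ℝ)| (Real.sqrt ((n : ℝ) * p)) := by
      apply Finset.sum_le_sum_of_subset_of_nonneg hTs
      intro x _ _
      exact mul_nonneg (hw0 x) (le_min (abs_nonneg _) (Real.sqrt_nonneg _))
    have step0 : 9 / 112 * Real.sqrt ((n : ℝ) * p)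
        ≤ ∑ x ∈ T, w x * (Real.sqrt ((n : ℝ) * p) / 2) := by
      rw [← Finset.sum_mul]
      have hs0 : (0 : ℝ) ≤ Real.sqrt ((n : ℝ) * p) / 2 := by positivity
      have := mul_le_mul_of_nonneg_right hPT hs0
      linarith
    linarith
  exact key
end

section
/- Let X ~ Binomial(n, p) with p ≤ 1/2 and np sufficiently large. Then Pr[X ≤ np − √(np)] = Ω(1); i.e., there is a universal constant c > 0 such that Pr[X ≤ np − √(np)] ≥ c. -/
/-!
Once `σ² = np(1-p) ≥ 1`, the fourth central moment of `Bin(n, p)` is at most `4σ⁴`, and a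
Paley–Zygmund type argument (two Cauchy–Schwarz steps) turns this into
`P[X ≤ np - σ/8] ≥ 1/64`. Moments alone cannot reach the deviation `√(np) > σ`, so the `n`
trials are split into 256 blocks of at least `n/512` trials each: every block falls
`σ_block/8` below its mean with probability `≥ 1/64`, these deviations add up to at least
`√(np)` because `p ≤ 1/2`, and by Vandermonde's identity binomial lower tails are
supermultiplicative under such a splitting, which gives the constant `(1/64)^256`.
-/

open Finset

noncomputable def binomWeight (p q : ℝ) (n k : ℕ) : ℝ := n.choose k * p ^ k * q ^ (n - k)

open scoped Classical in
/-- With `q = 1 - p`, this is `P[X ≤ t]` for `X ~ Bin(n, p)`. -/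
noncomputable def binomCdf (p q : ℝ) (n : ℕ) (t : ℝ) : ℝ :=
  ∑ k ∈ (range (n + 1)).filter (fun k : ℕ => (k : ℝ) ≤ t), binomWeight p q n k

theorem Nat.cast_descFactorial_eq_prod_sub {S : Type*} [CommRing S] (k r : ℕ) :
    (k.descFactorial r : S) = ∏ i ∈ range r, ((k : S) - i) := by
  induction r with
  | zero => simp
  | succ r ih =>
    rw [Nat.descFactorial_succ, prod_range_succ, Nat.cast_mul, ih, mul_comm]
    rcases le_or_gt r k with h | h
    · rw [Nat.cast_sub h]
    · rw [prod_eq_zero (mem_range.2 h) (sub_self _)]; simp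

theorem sum_binomWeight_mul_descFactorial (p q : ℝ) (r n : ℕ) :
    ∑ k ∈ range (n + 1), binomWeight p q n k * k.descFactorial r =
      n.descFactorial r * p ^ r * (p + q) ^ (n - r) := by
  induction r generalizing n with
  | zero =>
    simp only [binomWeight, add_pow, Nat.descFactorial_zero, Nat.cast_one, mul_one, one_mul,
      pow_zero, Nat.sub_zero]
    exact sum_congr rfl fun k _ => by ring
  | succ r ih =>
    rcases n with _ | m
    · simp [binomWeight]
    rw [sum_range_succ', Nat.succ_descFactorial_succ, Nat.succ_sub_succ]
    have hterm : ∀ i ∈ range (m + 1),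
        binomWeight p q (m + 1) (i + 1) * ((i + 1).descFactorial (r + 1) : ℝ) =
          (m + 1) * p * (binomWeight p q m i * i.descFactorial r) := by
      intro i _
      have h := congrArg (Nat.cast (R := ℝ)) (Nat.add_one_mul_choose_eq m i)
      push_cast at h
      rw [binomWeight, binomWeight, Nat.succ_descFactorial_succ, Nat.succ_sub_succ]
      push_cast
      linear_combination (-((i.descFactorial r : ℝ) * p ^ (i + 1) * q ^ (m - i))) * h
    rw [sum_congr rfl hterm, ← mul_sum, ih m, Nat.zero_descFactorial_succ, Nat.cast_zero,
      mul_zero, add_zero]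
    push_cast
    ring

section Moments

variable {p q : ℝ}

theorem sum_binomWeight_mul_prod_sub (hpq : p + q = 1) (n r : ℕ) :
    ∑ k ∈ range (n + 1), binomWeight p q n k * ∏ i ∈ range r, ((k : ℝ) - i) =
      (∏ i ∈ range r, ((n : ℝ) - i)) * p ^ r := by
  simpa [← Nat.cast_descFactorial_eq_prod_sub, hpq] using
    sum_binomWeight_mul_descFactorial p q r n

theorem sum_binomWeight (hpq : p + q = 1) (n : ℕ) :
    ∑ k ∈ range (n + 1), binomWeight p q n k = 1 := by
  simpa using sum_binomWeight_mul_prod_sub hpq n 0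

theorem sum_binomWeight_mul_sub (hpq : p + q = 1) (n : ℕ) :
    ∑ k ∈ range (n + 1), binomWeight p q n k * (n * p - k) = 0 := by
  have h1 := sum_binomWeight_mul_prod_sub hpq n 1
  simp only [prod_range_one, Nat.cast_zero, sub_zero, pow_one] at h1
  simp only [mul_sub, sum_sub_distrib, ← sum_mul, sum_binomWeight hpq, h1]
  ring

theorem sum_binomWeight_mul_sub_sq (hpq : p + q = 1) (n : ℕ) :
    ∑ k ∈ range (n + 1), binomWeight p q n k * (n * p - k) ^ 2 = n * p * q := by
  have h1 := sum_binomWeight_mul_prod_sub hpq n 1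
  have h2 := sum_binomWeight_mul_prod_sub hpq n 2
  simp only [prod_range_succ, prod_range_zero, Nat.cast_zero, Nat.cast_one, one_mul, sub_zero]
    at h1 h2
  calc _ = ∑ k ∈ range (n + 1), ((n * p) ^ 2 * binomWeight p q n k
        + (1 - 2 * (n * p)) * (binomWeight p q n k * k)
        + binomWeight p q n k * (k * (k - 1))) := sum_congr rfl fun k _ => by ring
    _ = _ := by
      simp only [sum_add_distrib, ← mul_sum, sum_binomWeight hpq, h1, h2]
      rw [show q = 1 - p by linarith]; ring

theorem sum_binomWeight_mul_sub_pow_four (hpq : p + q = 1) (n : ℕ) :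
    ∑ k ∈ range (n + 1), binomWeight p q n k * (n * p - k) ^ 4 =
      n * p * q * (1 - 6 * p * q) + 3 * (n * p * q) ^ 2 := by
  have h1 := sum_binomWeight_mul_prod_sub hpq n 1
  have h2 := sum_binomWeight_mul_prod_sub hpq n 2
  have h3 := sum_binomWeight_mul_prod_sub hpq n 3
  have h4 := sum_binomWeight_mul_prod_sub hpq n 4
  simp only [prod_range_succ, prod_range_zero, Nat.cast_zero, Nat.cast_one, Nat.cast_ofNat,
    one_mul, sub_zero] at h1 h2 h3 h4
  -- expand `(n p - k) ^ 4` in the falling factorials of `k`, whose means `h1`–`h4` give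
  calc _ = ∑ k ∈ range (n + 1), ((n * p) ^ 4 * binomWeight p q n k
        + (-4 * (n * p) ^ 3 + 6 * (n * p) ^ 2 - 4 * (n * p) + 1) * (binomWeight p q n k * k)
        + (6 * (n * p) ^ 2 - 12 * (n * p) + 7) * (binomWeight p q n k * (k * (k - 1)))
        + (-4 * (n * p) + 6) * (binomWeight p q n k * (k * (k - 1) * (k - 2)))
        + binomWeight p q n k * (k * (k - 1) * (k - 2) * (k - 3))) :=
      sum_congr rfl fun k _ => by ring
    _ = _ := by
      simp only [sum_add_distrib, ← mul_sum, sum_binomWeight hpq, h1, h2, h3, h4]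
      rw [show q = 1 - p by linarith]; ring

end Moments

section AntiConcentration

variable {ι : Type*} {s : Finset ι} {w f : ι → ℝ}

theorem sum_mul_sq_pow_three_le (hw : ∀ i ∈ s, 0 ≤ w i) :
    (∑ i ∈ s, w i * f i ^ 2) ^ 3 ≤
      (∑ i ∈ s, w i * |f i|) ^ 2 * ∑ i ∈ s, w i * f i ^ 4 := by
  set V := ∑ i ∈ s, w i * f i ^ 2
  set A := ∑ i ∈ s, w i * |f i|
  set C := ∑ i ∈ s, w i * |f i| ^ 3
  set D := ∑ i ∈ s, w i * f i ^ 4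
  have hV : 0 ≤ V := sum_nonneg fun i hi => mul_nonneg (hw i hi) (sq_nonneg _)
  have hD : 0 ≤ D := sum_nonneg fun i hi => mul_nonneg (hw i hi) (by positivity)
  have hVAC : V ^ 2 ≤ A * C := sum_sq_le_sum_mul_sum_of_sq_le_mul s
    (fun i hi => mul_nonneg (hw i hi) (abs_nonneg _))
    (fun i hi => mul_nonneg (hw i hi) (by positivity))
    (fun i _ => le_of_eq (by
      rw [show w i * |f i| * (w i * |f i| ^ 3) = w i ^ 2 * (|f i| ^ 2) ^ 2 by ring, sq_abs]; ring))
  have hCVD : C ^ 2 ≤ V * D := sum_sq_le_sum_mul_sum_of_sq_le_mul s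
    (fun i hi => mul_nonneg (hw i hi) (sq_nonneg _))
    (fun i hi => mul_nonneg (hw i hi) (by positivity))
    (fun i _ => le_of_eq (by
      rw [show (w i * |f i| ^ 3) ^ 2 = w i ^ 2 * (|f i| ^ 2) ^ 3 by ring, sq_abs]; ring))
  rcases hV.eq_or_lt with hV0 | hVpos
  · rw [← hV0, zero_pow three_ne_zero]; positivity
  refine le_of_mul_le_mul_left ?_ hVpos
  calc V * V ^ 3 = (V ^ 2) ^ 2 := by ring
    _ ≤ (A * C) ^ 2 := pow_le_pow_left₀ (sq_nonneg V) hVAC 2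
    _ = A ^ 2 * C ^ 2 := by ring
    _ ≤ A ^ 2 * (V * D) := mul_le_mul_of_nonneg_left hCVD (sq_nonneg A)
    _ = V * (A ^ 2 * D) := by ring

theorem sum_mul_max_zero_eq_half_sum_mul_abs (hmean : ∑ i ∈ s, w i * f i = 0) :
    ∑ i ∈ s, w i * max (f i) 0 = (∑ i ∈ s, w i * |f i|) / 2 := by
  have hpos : ∀ i, w i * max (f i) 0 = (w i * |f i| + w i * f i) / 2 := fun i => by
    rcases le_total (f i) 0 with h | h
    · rw [max_eq_right h, abs_of_nonpos h]; ring
    · rw [max_eq_left h, abs_of_nonneg h]; ring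
  simp only [hpos, ← sum_div, sum_add_distrib, hmean, add_zero]

theorem sum_mul_max_zero_sub_le_sum_filter (hw : ∀ i ∈ s, 0 ≤ w i)
    (hw1 : ∑ i ∈ s, w i ≤ 1) {t : ℝ} (ht : 0 ≤ t) :
    ∑ i ∈ s, w i * max (f i) 0 - t ≤ ∑ i ∈ s with t ≤ f i, w i * f i := by
  rw [← sum_filter_add_sum_filter_not s (fun i => t ≤ f i)]
  have hlarge :
      ∑ i ∈ s with t ≤ f i, w i * max (f i) 0 = ∑ i ∈ s with t ≤ f i, w i * f i :=
    sum_congr rfl fun i hi => by rw [max_eq_left (ht.trans (mem_filter.1 hi).2)]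
  have hsmall : ∑ i ∈ s with ¬t ≤ f i, w i * max (f i) 0 ≤ t :=
    calc _ ≤ ∑ i ∈ s with ¬t ≤ f i, w i * t := sum_le_sum fun i hi => by
          obtain ⟨hi, hlt⟩ := mem_filter.1 hi
          exact mul_le_mul_of_nonneg_left (max_le (not_le.1 hlt).le ht) (hw i hi)
      _ ≤ ∑ i ∈ s, w i * t := sum_le_sum_of_subset_of_nonneg (filter_subset _ _)
          fun i hi _ => mul_nonneg (hw i hi) ht
      _ ≤ t := by rw [← sum_mul]; exact mul_le_of_le_one_left ht hw1
  linarith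

theorem one_div_sixtyFour_le_sum_filter (hw : ∀ i ∈ s, 0 ≤ w i) (hw1 : ∑ i ∈ s, w i = 1)
    (hmean : ∑ i ∈ s, w i * f i = 0) (hV : 0 < ∑ i ∈ s, w i * f i ^ 2)
    (h4 : ∑ i ∈ s, w i * f i ^ 4 ≤ 4 * (∑ i ∈ s, w i * f i ^ 2) ^ 2) :
    1 / 64 ≤ ∑ i ∈ s with √(∑ i ∈ s, w i * f i ^ 2) / 8 ≤ f i, w i := by
  set V := ∑ i ∈ s, w i * f i ^ 2
  set σ := √V
  set T := s.filter fun i => σ / 8 ≤ f i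
  have hσ : 0 < σ := Real.sqrt_pos.2 hV
  have hσV : σ ^ 2 = V := Real.sq_sqrt hV.le
  set A := ∑ i ∈ s, w i * |f i|
  have hA : σ / 2 ≤ A := by
    have h : V * V ^ 2 ≤ 4 * A ^ 2 * V ^ 2 := by
      linarith [(sum_mul_sq_pow_three_le (f := f) hw).trans
        (mul_le_mul_of_nonneg_left h4 (sq_nonneg A))]
    have hVA : σ ^ 2 ≤ (2 * A) ^ 2 := by
      rw [hσV]; linarith [le_of_mul_le_mul_right h (by positivity)]
    have hA0 : 0 ≤ A := sum_nonneg fun i hi => mul_nonneg (hw i hi) (abs_nonneg _)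
    linarith [pow_le_pow_iff_left₀ hσ.le (by positivity : 0 ≤ 2 * A) two_ne_zero |>.1 hVA]
  have hT : σ / 8 ≤ ∑ i ∈ T, w i * f i := by
    have := sum_mul_max_zero_sub_le_sum_filter hw hw1.le (f := f) (by positivity : 0 ≤ σ / 8)
    rw [sum_mul_max_zero_eq_half_sum_mul_abs hmean] at this
    linarith
  have hCS : (∑ i ∈ T, w i * f i) ^ 2 ≤ (∑ i ∈ T, w i) * ∑ i ∈ T, w i * f i ^ 2 :=
    sum_sq_le_sum_mul_sum_of_sq_le_mul T (fun i hi => hw i (mem_filter.1 hi).1)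
      (fun i hi => mul_nonneg (hw i (mem_filter.1 hi).1) (sq_nonneg _))
      (fun i _ => le_of_eq (by ring))
  have hTV : ∑ i ∈ T, w i * f i ^ 2 ≤ V := sum_le_sum_of_subset_of_nonneg (filter_subset _ _)
    fun i hi _ => mul_nonneg (hw i hi) (sq_nonneg _)
  have hT0 : 0 ≤ ∑ i ∈ T, w i := sum_nonneg fun i hi => hw i (mem_filter.1 hi).1
  nlinarith [mul_le_mul_of_nonneg_left hTV hT0]

end AntiConcentration

section Binomial

variable {p q : ℝ}

theorem binomWeight_nonneg (hp : 0 ≤ p) (hq : 0 ≤ q) (n k : ℕ) :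
    0 ≤ binomWeight p q n k := by
  unfold binomWeight; positivity

theorem binomCdf_mono (hp : 0 ≤ p) (hq : 0 ≤ q) (n : ℕ) {t t' : ℝ} (h : t ≤ t') :
    binomCdf p q n t ≤ binomCdf p q n t' :=
  sum_le_sum_of_subset_of_nonneg (monotone_filter_right _ fun _ _ hk => hk.trans h)
    fun k _ _ => binomWeight_nonneg hp hq n k

theorem one_div_sixtyFour_le_binomCdf (hp : 0 ≤ p) (hq : 0 ≤ q) (hpq : p + q = 1) {n : ℕ}
    (hv : 1 ≤ n * p * q) : 1 / 64 ≤ binomCdf p q n (n * p - √(n * p * q) / 8) := by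
  have h4 : ∑ k ∈ range (n + 1), binomWeight p q n k * (n * p - k) ^ 4 ≤
      4 * (∑ k ∈ range (n + 1), binomWeight p q n k * (n * p - k) ^ 2) ^ 2 := by
    rw [sum_binomWeight_mul_sub_pow_four hpq, sum_binomWeight_mul_sub_sq hpq]
    nlinarith [mul_nonneg hp hq]
  have h := one_div_sixtyFour_le_sum_filter (fun k _ => binomWeight_nonneg hp hq n k)
    (sum_binomWeight hpq n) (sum_binomWeight_mul_sub hpq n)
    (by rw [sum_binomWeight_mul_sub_sq hpq]; linarith) h4
  unfold binomCdf
  rw [sum_binomWeight_mul_sub_sq hpq] at h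
  convert h using 2
  refine filter_congr fun k _ => ?_
  constructor <;> intro hk <;> linarith

theorem binomWeight_mul_binomWeight (m n i j : ℕ) :
    binomWeight p q m i * binomWeight p q n j =
      m.choose i * n.choose j * p ^ (i + j) * q ^ (m + n - (i + j)) := by
  unfold binomWeight
  by_cases h : i ≤ m ∧ j ≤ n
  · rw [show m + n - (i + j) = (m - i) + (n - j) by omega, pow_add, pow_add]; ring
  · rcases not_and_or.1 h with h | h <;> simp [Nat.choose_eq_zero_of_lt (not_le.1 h)]

theorem sum_antidiagonal_binomWeight_mul_binomWeight (m n k : ℕ) :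
    ∑ x ∈ antidiagonal k, binomWeight p q m x.1 * binomWeight p q n x.2 =
      binomWeight p q (m + n) k := by
  rw [binomWeight, Nat.add_choose_eq, Nat.cast_sum, sum_mul, sum_mul]
  refine sum_congr rfl fun x hx => ?_
  rw [binomWeight_mul_binomWeight, mem_antidiagonal.1 hx]
  push_cast; ring

theorem binomCdf_mul_binomCdf_le (hp : 0 ≤ p) (hq : 0 ≤ q) (m n : ℕ) (t t' : ℝ) :
    binomCdf p q m t * binomCdf p q n t' ≤ binomCdf p q (m + n) (t + t') := by
  unfold binomCdf
  rw [sum_mul_sum, ← sum_product']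
  have hmaps : ∀ x ∈ (range (m + 1)).filter (fun i : ℕ => (i : ℝ) ≤ t) ×ˢ
      (range (n + 1)).filter (fun j : ℕ => (j : ℝ) ≤ t'),
      x.1 + x.2 ∈ (range (m + n + 1)).filter (fun k : ℕ => (k : ℝ) ≤ t + t') := by
    simp only [mem_product, mem_filter, mem_range]
    rintro x ⟨⟨hi, hit⟩, hj, hjt⟩
    exact ⟨by omega, by push_cast; linarith⟩
  rw [← sum_fiberwise_of_maps_to hmaps]
  refine sum_le_sum fun k _ => ?_
  rw [← sum_antidiagonal_binomWeight_mul_binomWeight]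
  exact sum_le_sum_of_subset_of_nonneg (fun x hx => mem_antidiagonal.2 (mem_filter.1 hx).2)
    fun x _ _ => mul_nonneg (binomWeight_nonneg hp hq _ _) (binomWeight_nonneg hp hq _ _)

theorem pow_succ_le_binomCdf (hp : 0 ≤ p) (hq : 0 ≤ q) {c s : ℝ} {d : ℕ} (hc : 0 ≤ c)
    (h : ∀ a, d ≤ a → c ≤ binomCdf p q a (a * p - s)) (k : ℕ) {a : ℕ} (ha : d ≤ a) :
    c ^ (k + 1) ≤ binomCdf p q (k * d + a) ((k * d + a : ℕ) * p - (k + 1) * s) := by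
  induction k with
  | zero => simpa using h a ha
  | succ k ih =>
    have hd := h d le_rfl
    calc c ^ (k + 1 + 1) = c * c ^ (k + 1) := pow_succ' c (k + 1)
      _ ≤ binomCdf p q d (d * p - s) *
          binomCdf p q (k * d + a) ((k * d + a : ℕ) * p - (k + 1) * s) :=
        mul_le_mul hd ih (by positivity) (hc.trans hd)
      _ ≤ binomCdf p q (d + (k * d + a)) (d * p - s + ((k * d + a : ℕ) * p - (k + 1) * s)) :=
        binomCdf_mul_binomCdf_le hp hq _ _ _ _
      _ = _ := by
        congr 1
        · ring
        · push_cast; ring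

end Binomial

open scoped Classical in
/-- For X ~ Binomial(n,p) with `p ≤ 1/2` and `np` sufficiently large,
`Pr[X ≤ np − √(np)] ≥ c` for a universal constant `c > 0`. -/
theorem stmt_2 :
    ∃ c : ℝ, 0 < c ∧ ∃ M : ℝ, ∀ (n : ℕ) (p : ℝ),
      0 ≤ p → p ≤ 1 / 2 → M ≤ (n : ℝ) * p →
      c ≤ ∑ k ∈ (range (n + 1)).filter
            (fun k : ℕ => (k : ℝ) ≤ (n : ℝ) * p - Real.sqrt ((n : ℝ) * p)),
          (n.choose k : ℝ) * p ^ k * (1 - p) ^ (n - k) := by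
  refine ⟨(1 / 64) ^ 256, by positivity, 1024, fun n p hp hp2 hM => ?_⟩
  set d := n / 256
  have hd : (n : ℝ) / 512 ≤ d := by
    have hdiv : ((256 * d + n % 256 : ℕ) : ℝ) = n := by rw [Nat.div_add_mod]
    have hmod : ((n % 256 : ℕ) : ℝ) ≤ 255 := by
      exact_mod_cast Nat.le_of_lt_succ (Nat.mod_lt n (by norm_num))
    push_cast at hdiv
    nlinarith
  have hchunk : ∀ a, d ≤ a → 1 / 64 ≤ binomCdf p (1 - p) a (a * p - √(n * p) / 256) := by
    intro a ha
    have hna : (n : ℝ) * p ≤ 1024 * (a * p * (1 - p)) := by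
      have : (n : ℝ) / 512 ≤ a := hd.trans (by exact_mod_cast ha)
      nlinarith [mul_nonneg (sub_nonneg.2 this) hp, mul_nonneg hp (sub_nonneg.2 hp2)]
    have hsqrt : √(n * p) ≤ 32 * √(a * p * (1 - p)) :=
      calc √(n * p) ≤ √(32 ^ 2 * (a * p * (1 - p))) := Real.sqrt_le_sqrt (by linarith)
        _ = 32 * √(a * p * (1 - p)) := by
          rw [Real.sqrt_mul' _ (by nlinarith), Real.sqrt_sq (by norm_num)]
    exact (one_div_sixtyFour_le_binomCdf hp (by linarith) (by ring) (by linarith)).trans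
      (binomCdf_mono hp (by linarith) a (by linarith))
  have h := pow_succ_le_binomCdf hp (by linarith) (by norm_num) hchunk 255
    (Nat.le_add_right d (n % 256))
  have hthreshold :
      (n : ℝ) * p - ((255 : ℕ) + 1) * (√(n * p) / 256) = n * p - √(n * p) := by
    push_cast; ring
  rwa [show 255 * d + (d + n % 256) = n by omega, hthreshold] at h
end

section
/- In a rooted forest, a single edge insertion or deletion changes the canonical subtree-isomorphism label of at most σ vertices, where σ is the maximum depth of any tree in the forest (before and after the operation). Formally: if forest F' is obtained from F by deleting one edge (the child becoming a new root) or inserting one edge (whose child was a root), then the number of vertices v present in both forests whose rooted subtree isomorphism class differs between F and F' is at most σ. -/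
/-!
Deleting the edge from `x` to its parent `u` leaves the child relation unchanged at every vertex
other than `u`. The subtree at `v` only sees the child relation at descendants of `v`, so it can
change only if `u` is a descendant of `v`, i.e. `v` is one of the at most `σ` ancestors of `u`.
An insertion is a deletion read backwards.
-/

/-- `a` is a descendant of `v` (reflexively) under the parent map `p`. -/
def PDesc {V : Type*} (p : V → Option V) (v a : V) : Prop :=
  Relation.ReflTransGen (fun x y : V => p y = some x) v a

/-- The rooted subtrees at `v` (under `p`) and at `w` (under `p'`) are isomorphic. -/
def PSubtreeIso {V : Type*} (p p' : V → Option V) (v w : V) : Prop :=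
  ∃ φ : {a : V // PDesc p v a} ≃ {b : V // PDesc p' w b},
    (φ ⟨v, Relation.ReflTransGen.refl⟩).1 = w ∧
    ∀ a b : {a : V // PDesc p v a},
      p b.1 = some a.1 ↔ p' (φ b).1 = some (φ a).1

/-- The ancestors of `v` (including `v` itself) under the parent map `p`. -/
def PAnc {V : Type*} (p : V → Option V) (v : V) : Set V :=
  {a | Relation.ReflTransGen (fun x y : V => p x = some y) v a}

section

variable {V : Type*} {p p' : V → Option V}

theorem PSubtreeIso.symm {v w : V} (h : PSubtreeIso p p' v w) : PSubtreeIso p' p w v := by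
  obtain ⟨φ, hroot, hedge⟩ := h
  have hroot' : φ ⟨v, .refl⟩ = ⟨w, .refl⟩ := Subtype.ext hroot
  refine ⟨φ.symm, by rw [← hroot', Equiv.symm_apply_apply], fun a b => ?_⟩
  simpa only [Equiv.apply_symm_apply] using (hedge (φ.symm a) (φ.symm b)).symm

theorem mem_pAnc_iff_pDesc {u v : V} : v ∈ PAnc p u ↔ PDesc p v u :=
  Relation.reflTransGen_swap

theorem pDesc_iff_of_children_eq {v : V}
    (hchild : ∀ a c, PDesc p v a → (p c = some a ↔ p' c = some a))
    {b : V} : PDesc p v b ↔ PDesc p' v b := by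
  constructor
  · intro h
    induction h with
    | refl => exact .refl
    | tail hab hbc ih => exact ih.tail ((hchild _ _ hab).mp hbc)
  · intro h
    induction h with
    | refl => exact .refl
    | tail _ hbc ih => exact ih.tail ((hchild _ _ ih).mpr hbc)

theorem psubtreeIso_self_of_children_eq {v : V}
    (hchild : ∀ a c, PDesc p v a → (p c = some a ↔ p' c = some a)) : PSubtreeIso p p' v v :=
  ⟨Equiv.subtypeEquivRight fun _ => pDesc_iff_of_children_eq hchild, rfl,
    fun a b => hchild a.1 b.1 a.2⟩

theorem children_eq_of_delete_edge {x u : V} (heq : ∀ z, z ≠ x → p' z = p z)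
    (hpx : p x = some u) (hpx' : p' x = none) {v : V} (hv : ¬ PDesc p v u) (a c : V) (ha : PDesc p v a) :
    p c = some a ↔ p' c = some a := by
  by_cases hc : c = x
  · subst hc
    have hau : a ≠ u := fun h => hv (h ▸ ha)
    simp [hpx, hpx', hau.symm]
  · rw [heq c hc]

theorem setOf_not_psubtreeIso_subset_pAnc_of_delete_edge {x u : V}
    (heq : ∀ z, z ≠ x → p' z = p z) (hpx : p x = some u) (hpx' : p' x = none) :
    {v | ¬ PSubtreeIso p p' v v} ⊆ PAnc p u := fun v hv => by
  by_contra hu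
  exact hv (psubtreeIso_self_of_children_eq
    (children_eq_of_delete_edge heq hpx hpx' (mt mem_pAnc_iff_pDesc.mpr hu)))

theorem ncard_setOf_not_psubtreeIso_le_of_delete_edge [Finite V] {x u : V}
    (heq : ∀ z, z ≠ x → p' z = p z) (hpx : p x = some u) (hpx' : p' x = none) :
    {v | ¬ PSubtreeIso p p' v v}.ncard ≤ (PAnc p u).ncard :=
  Set.ncard_le_ncard (setOf_not_psubtreeIso_subset_pAnc_of_delete_edge heq hpx hpx')

theorem setOf_not_psubtreeIso_comm :
    {v | ¬ PSubtreeIso p p' v v} = {v | ¬ PSubtreeIso p' p v v} :=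
  Set.ext fun _ => not_congr ⟨PSubtreeIso.symm, PSubtreeIso.symm⟩

end

theorem stmt_13_general {V : Type*} [Fintype V] (p p' : V → Option V) (σ : ℕ)
    (hdepth : ∀ v : V, (PAnc p v).ncard ≤ σ ∧ (PAnc p' v).ncard ≤ σ)
    (hchange : ∃ x : V, (∀ z : V, z ≠ x → p' z = p z) ∧
      ((p x ≠ none ∧ p' x = none) ∨ (p x = none ∧ p' x ≠ none))) :
    {v : V | ¬ PSubtreeIso p p' v v}.ncard ≤ σ := by
  obtain ⟨x, heq, ⟨hpx, hpx'⟩ | ⟨hpx, hpx'⟩⟩ := hchange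
  · obtain ⟨u, hu⟩ := Option.ne_none_iff_exists'.mp hpx
    exact (ncard_setOf_not_psubtreeIso_le_of_delete_edge heq hu hpx').trans (hdepth u).1
  · obtain ⟨u, hu⟩ := Option.ne_none_iff_exists'.mp hpx'
    rw [setOf_not_psubtreeIso_comm]
    exact (ncard_setOf_not_psubtreeIso_le_of_delete_edge (fun z hz => (heq z hz).symm) hu
      hpx).trans (hdepth u).2

/-- in a rooted forest of depth at most `σ` (before and after), a single edge
deletion (a vertex's parent pointer removed) or insertion (a root acquiring a parent)
changes the subtree isomorphism class of at most `σ` vertices. -/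
theorem stmt_13 {V : Type*} [Fintype V] (p p' : V → Option V) (σ : ℕ)
    (hacc : ∀ v, Acc (fun x y : V => p y = some x) v)
    (hacc' : ∀ v, Acc (fun x y : V => p' y = some x) v)
    (hdepth : ∀ v : V, (PAnc p v).ncard ≤ σ ∧ (PAnc p' v).ncard ≤ σ)
    (hchange : ∃ x : V, (∀ z : V, z ≠ x → p' z = p z) ∧
      ((p x ≠ none ∧ p' x = none) ∨ (p x = none ∧ p' x ≠ none))) :
    {v : V | ¬ PSubtreeIso p p' v v}.ncard ≤ σ :=
  stmt_13_general p p' σ hdepth hchange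
end
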